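/- arXiv:0706.0489 — 3 statements merged into one kernel-verified Lean document; each statement's English description precedes it below -/
import Mathlib

section
/- In the triangular lattice, for every vertex v and every natural number d, the number of vertices at graph distance exactly d+1 from v equals 6(d+1). -/
/-- Vertices of the triangular lattice: points `(x,y) ∈ ℤ²` with `x + y` even. -/
def TriPt : Type := {p : ℤ × ℤ // (p.1 + p.2) % 2 = 0}

/-- Adjacency offsets of the triangular lattice. -/
def triAdj (p q : ℤ × ℤ) : Prop :=
  (q.1 - p.1 = 0 ∧ q.2 - p.2 = 2) ∨ (q.1 - p.1 = 1 ∧ q.2 - p.2 = 1) ∨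
  (q.1 - p.1 = 1 ∧ q.2 - p.2 = -1) ∨ (q.1 - p.1 = 0 ∧ q.2 - p.2 = -2) ∨
  (q.1 - p.1 = -1 ∧ q.2 - p.2 = -1) ∨ (q.1 - p.1 = -1 ∧ q.2 - p.2 = 1)

/-- The triangular lattice as a simple graph. -/
def triGraph : SimpleGraph TriPt where
  Adj v w := triAdj v.1 w.1
  symm := by
    constructor
    rintro ⟨⟨a, b⟩, _⟩ ⟨⟨c, d⟩, _⟩ h
    unfold triAdj at *
    omega
  loopless := by
    constructor
    rintro ⟨⟨a, b⟩, _⟩ h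
    unfold triAdj at h
    omega

/-!
The graph distance from the origin of the triangular lattice is the norm
`max |x| ((|x| + |y|) / 2)`: a step changes `|x|` by at most one and `|x| + |y|` by at most two,
and from every point other than the origin some step decreases the norm. The points of norm
`n ≥ 1` form a hexagon whose corners are `n` times the six unit vectors of the lattice; each of
its six sides carries `n` lattice points.
-/

theorem SimpleGraph.dist_eq_of_adj_le_succ_of_exists_adj_lt {V : Type*} {G : SimpleGraph V}
    {v : V} (f : V → ℕ) (hv : f v = 0) (hadj : ∀ ⦃u w⦄, G.Adj u w → f w ≤ f u + 1)
    (hdesc : ∀ w, w ≠ v → ∃ u, G.Adj u w ∧ f u < f w) (w : V) :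
    G.dist v w = f w := by
  have hlower : ∀ {u w} (p : G.Walk u w), f w ≤ f u + p.length := by
    intro u w p
    induction p with
    | nil => simp
    | cons h p ih => have := hadj h; simp only [Walk.length_cons]; omega
  have hupper : ∀ w, ∃ p : G.Walk v w, p.length ≤ f w := by
    intro w
    induction h : f w using Nat.strong_induction_on generalizing w with
    | _ n ih =>
      by_cases hw : w = v
      · subst hw; exact ⟨.nil, by simp⟩
      obtain ⟨u, huw, hlt⟩ := hdesc w hw
      obtain ⟨p, hp⟩ := ih (f u) (h ▸ hlt) u rfl
      exact ⟨p.concat huw, by rw [Walk.length_concat]; omega⟩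
  obtain ⟨p, hp⟩ := hupper w
  obtain ⟨q, hq⟩ := p.reachable.exists_walk_length_eq_dist
  have := hlower q
  have := G.dist_le p
  omega

def triNorm (p : ℤ × ℤ) : ℕ := max p.1.natAbs ((p.1.natAbs + p.2.natAbs) / 2)

lemma triNorm_le_of_triAdj {p q : ℤ × ℤ} (h : triAdj p q) : triNorm q ≤ triNorm p + 1 := by
  unfold triAdj at h
  unfold triNorm
  omega

lemma exists_triAdj_triNorm_lt {p : ℤ × ℤ} (hp : (p.1 + p.2) % 2 = 0) (h0 : p ≠ 0) :
    ∃ q : ℤ × ℤ, (q.1 + q.2) % 2 = 0 ∧ triAdj q p ∧ triNorm q < triNorm p := by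
  obtain ⟨x, y⟩ := p
  simp only [triAdj, triNorm, ne_eq, Prod.mk_eq_zero, Prod.exists] at *
  rcases lt_trichotomy x 0 with hx | rfl | hx <;> rcases le_or_gt y 0 with hy | hy
  · exact ⟨x + 1, y + 1, by omega⟩
  · exact ⟨x + 1, y - 1, by omega⟩
  · exact ⟨0, y + 2, by omega⟩
  · exact ⟨0, y - 2, by omega⟩
  · exact ⟨x - 1, y + 1, by omega⟩
  · exact ⟨x - 1, y - 1, by omega⟩

lemma triAdj_sub_right {p q : ℤ × ℤ} (r : ℤ × ℤ) : triAdj (p - r) (q - r) ↔ triAdj p q := by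
  simp only [triAdj, Prod.fst_sub, Prod.snd_sub, sub_sub_sub_cancel_right]

lemma TriPt.val_sub_val_parity (v w : TriPt) : ((w.1 - v.1).1 + (w.1 - v.1).2) % 2 = 0 := by
  have := v.2
  have := w.2
  simp only [Prod.fst_sub, Prod.snd_sub]
  omega

lemma TriPt.add_val_parity (v : TriPt) {p : ℤ × ℤ} (hp : (p.1 + p.2) % 2 = 0) :
    ((p + v.1).1 + (p + v.1).2) % 2 = 0 := by
  have := v.2
  simp only [Prod.fst_add, Prod.snd_add]
  omega

lemma triGraph_dist_eq (v w : TriPt) : triGraph.dist v w = triNorm (w.1 - v.1) := by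
  refine SimpleGraph.dist_eq_of_adj_le_succ_of_exists_adj_lt (fun u : TriPt => triNorm (u.1 - v.1))
    (by simp [triNorm]) (fun u w h => triNorm_le_of_triAdj ((triAdj_sub_right v.1).2 h)) ?_ w
  intro w hw
  obtain ⟨q, hqpar, hq, hlt⟩ := exists_triAdj_triNorm_lt (v.val_sub_val_parity w)
    (sub_ne_zero.2 (Subtype.coe_ne_coe.2 hw))
  refine ⟨⟨q + v.1, v.add_val_parity hqpar⟩, ?_, by simpa using hlt⟩
  show triAdj (q + v.1) w.1
  rw [← triAdj_sub_right v.1]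
  simpa using hq

/-- Side `i` of `hexagon n` starts at `n • hexCorner i` and runs parallel to
`hexCorner (i + 2) = hexCorner (i + 1) - hexCorner i`. -/
def hexCorner : Fin 6 → ℤ × ℤ := ![(0, 2), (1, 1), (1, -1), (0, -2), (-1, -1), (-1, 1)]

def hexagon (n : ℕ) : Finset (ℤ × ℤ) :=
  (Finset.univ ×ˢ Finset.range n).image fun it => n • hexCorner it.1 + it.2 • hexCorner (it.1 + 2)

lemma hexagon_card (n : ℕ) : (hexagon n).card = 6 * n := by
  rw [hexagon, Finset.card_image_of_injOn, Finset.card_product, Finset.card_univ, Fintype.card_fin,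
    Finset.card_range]
  rintro ⟨i, t⟩ hit ⟨j, s⟩ hjs h
  simp only [Finset.coe_product, Finset.coe_univ, Set.univ_prod, Set.mem_preimage, Finset.coe_range,
    Set.mem_Iio] at hit hjs
  fin_cases i <;> fin_cases j <;> simp [hexCorner, Prod.ext_iff] at h ⊢ <;> omega

lemma mem_hexagon_iff {n : ℕ} (hn : 0 < n) (p : ℤ × ℤ) :
    p ∈ hexagon n ↔ (p.1 + p.2) % 2 = 0 ∧ triNorm p = n := by
  obtain ⟨x, y⟩ := p
  simp only [hexagon, Finset.mem_image, Finset.mem_product, Finset.mem_univ, true_and,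
    Finset.mem_range, Prod.exists, triNorm]
  constructor
  · rintro ⟨i, t, ht, h⟩
    fin_cases i <;> simp [hexCorner, Prod.ext_iff] at h <;> omega
  · rintro ⟨hpar, hnorm⟩
    have hne : x ≠ 0 ∨ y ≠ 0 := by omega
    obtain h | h | h | h | h | h : 0 ≤ x ∧ x < y ∨ -x < y ∧ y ≤ x ∨ 0 < x ∧ y ≤ -x ∨
        x ≤ 0 ∧ y < x ∨ x ≤ y ∧ y < -x ∨ x < 0 ∧ -x ≤ y := by omega
    · exact ⟨0, x.toNat, by omega, by simp [hexCorner]; omega⟩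
    · exact ⟨1, ((n - y) / 2).toNat, by omega, by simp [hexCorner]; omega⟩
    · exact ⟨2, (n - x).toNat, by omega, by simp [hexCorner]; omega⟩
    · exact ⟨3, (-x).toNat, by omega, by simp [hexCorner]; omega⟩
    · exact ⟨4, ((y + n) / 2).toNat, by omega, by simp [hexCorner]; omega⟩
    · exact ⟨5, (x + n).toNat, by omega, by simp [hexCorner]; omega⟩

/-- In the triangular lattice, exactly `6(d+1)` vertices are at graph distance
`d+1` from any vertex `v`. -/
theorem stmt7 (v : TriPt) (d : ℕ) :
    {w : TriPt | triGraph.dist v w = d + 1}.ncard = 6 * (d + 1) := by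
  have hinj : Function.Injective fun w : TriPt => w.1 - v.1 :=
    (sub_left_injective (b := v.1)).comp Subtype.val_injective
  have himage : (fun w : TriPt => w.1 - v.1) '' {w | triGraph.dist v w = d + 1} = hexagon (d + 1) := by
    ext p
    simp only [Set.mem_image, Set.mem_ofPred_eq, triGraph_dist_eq, Finset.mem_coe,
      mem_hexagon_iff d.succ_pos]
    constructor
    · rintro ⟨w, hw, rfl⟩
      exact ⟨v.val_sub_val_parity w, hw⟩
    · rintro ⟨hpar, hp⟩
      exact ⟨⟨p + v.1, v.add_val_parity hpar⟩, by simpa using hp, by simp⟩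
  rw [← Set.ncard_image_of_injective _ hinj, himage, Set.ncard_coe_finset, hexagon_card]
end

section
/- Let G be a finite graph of maximum degree Δ and q ≥ Δ + 2. Then the Glauber dynamics on proper q-colourings of G is irreducible: any proper q-colouring can be transformed into any other via a finite sequence of single-vertex recolourings, each intermediate colouring being proper. -/
open Finset

private def GStep {V : Type*} (G : SimpleGraph V) (q : ℕ) :
    (V → Fin q) → (V → Fin q) → Prop :=
  fun C₁ C₂ => (∀ u w, G.Adj u w → C₂ u ≠ C₂ w) ∧ ∃ v, ∀ u, u ≠ v → C₁ u = C₂ u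

private lemma exists_colour {V : Type*} [Fintype V] (G : SimpleGraph V) [DecidableRel G.Adj]
    (Δ q : ℕ) (hΔ : ∀ v, G.degree v ≤ Δ) (hq : Δ + 2 ≤ q)
    (C : V → Fin q) (u : V) (c : Fin q) :
    ∃ d : Fin q, d ≠ c ∧ ∀ w, G.Adj u w → d ≠ C w := by
  classical
  set S : Finset (Fin q) := insert c ((G.neighborFinset u).image C) with hS
  have h2 : ((G.neighborFinset u).image C).card ≤ G.degree u := by
    simpa [SimpleGraph.card_neighborFinset_eq_degree] using
      card_image_le (s := G.neighborFinset u) (f := C)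
  have hcard : S.card < q := by
    have h1 : S.card ≤ ((G.neighborFinset u).image C).card + 1 := card_insert_le _ _
    have := hΔ u
    omega
  have hne : Sᶜ.Nonempty := by
    rw [← card_pos, card_compl]
    simp only [Fintype.card_fin]
    omega
  obtain ⟨d, hd⟩ := hne
  rw [mem_compl] at hd
  refine ⟨d, ?_, ?_⟩
  · intro h; exact hd (by simp [hS, h])
  · intro w hw h
    exact hd (by
      simp only [hS, mem_insert, mem_image]
      exact Or.inr ⟨w, by rwa [SimpleGraph.mem_neighborFinset], h.symm⟩)

private lemma clear_nbrs {V : Type*} [Fintype V] [DecidableEq V]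
    (G : SimpleGraph V) [DecidableRel G.Adj]
    (Δ q : ℕ) (hΔ : ∀ v, G.degree v ≤ Δ) (hq : Δ + 2 ≤ q) (v : V) (c : Fin q) :
    ∀ m (C : V → Fin q), (∀ u w, G.Adj u w → C u ≠ C w) →
      (univ.filter (fun u => G.Adj v u ∧ C u = c)).card ≤ m →
      ∃ C', Relation.ReflTransGen (GStep G q) C C' ∧
        (∀ u w, G.Adj u w → C' u ≠ C' w) ∧
        (∀ u, G.Adj v u → C' u ≠ c) ∧
        (∀ u, C' u ≠ C u → G.Adj v u ∧ C u = c) := by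
  intro m
  induction m with
  | zero =>
    intro C hC hcard
    refine ⟨C, Relation.ReflTransGen.refl, hC, ?_, fun u h => absurd rfl h⟩
    intro u hu hc
    have : u ∈ univ.filter (fun u => G.Adj v u ∧ C u = c) := by simp [hu, hc]
    rw [Nat.le_zero, card_eq_zero] at hcard
    simp [hcard] at this
  | succ m ih =>
    intro C hC hcard
    by_cases hempty : (univ.filter (fun u => G.Adj v u ∧ C u = c)) = ∅
    · refine ⟨C, Relation.ReflTransGen.refl, hC, ?_, fun u h => absurd rfl h⟩
      intro u hu hc
      have : u ∈ univ.filter (fun u => G.Adj v u ∧ C u = c) := by simp [hu, hc]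
      simp [hempty] at this
    · obtain ⟨u, hu⟩ := nonempty_of_ne_empty hempty
      rw [mem_filter] at hu
      have huv : G.Adj v u := hu.2.1
      have huc : C u = c := hu.2.2
      obtain ⟨d, hdc, hdnb⟩ := exists_colour G Δ q hΔ hq C u c
      set C₁ : V → Fin q := Function.update C u d with hC₁def
      have hupd_ne : ∀ w, w ≠ u → C₁ w = C w := fun w hw => Function.update_of_ne hw _ _
      have hupd_u : C₁ u = d := Function.update_self _ _ _
      have hC₁ : ∀ a b, G.Adj a b → C₁ a ≠ C₁ b := by
        intro a b hab
        by_cases ha : a = u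
        · rw [ha] at hab ⊢
          have hb : b ≠ u := hab.ne'
          rw [hupd_u, hupd_ne b hb]
          exact hdnb b hab
        · by_cases hb : b = u
          · rw [hb] at hab ⊢
            rw [hupd_u, hupd_ne a ha]
            exact fun h => hdnb a hab.symm h.symm
          · rw [hupd_ne a ha, hupd_ne b hb]
            exact hC a b hab
      have hstep : GStep G q C C₁ :=
        ⟨hC₁, u, fun w hw => (hupd_ne w hw).symm⟩
      have hsub : (univ.filter (fun w => G.Adj v w ∧ C₁ w = c)) ⊆
          (univ.filter (fun w => G.Adj v w ∧ C w = c)).erase u := by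
        intro w hw
        rw [mem_filter] at hw
        have hwu : w ≠ u := by
          intro h; subst h
          rw [hupd_u] at hw
          exact hdc hw.2.2
        rw [mem_erase, mem_filter]
        exact ⟨hwu, mem_univ _, hw.2.1, (hupd_ne w hwu) ▸ hw.2.2⟩
      have hcard' : (univ.filter (fun w => G.Adj v w ∧ C₁ w = c)).card ≤ m := by
        have h1 := card_le_card hsub
        have hmem : u ∈ univ.filter (fun w => G.Adj v w ∧ C w = c) := by
          simp [huv, huc]
        rw [card_erase_of_mem hmem] at h1
        omega
      obtain ⟨C', hpath, hC', hadj, hchg⟩ := ih C₁ hC₁ hcard'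
      refine ⟨C', Relation.ReflTransGen.head hstep hpath, hC', hadj, ?_⟩
      intro w hw
      by_cases hwu : w = u
      · subst hwu; exact ⟨huv, huc⟩
      · rw [← hupd_ne w hwu] at hw ⊢
        exact (hchg w hw).imp id (fun h => h)

private lemma glauber_main {V : Type*} [Fintype V] [DecidableEq V]
    (G : SimpleGraph V) [DecidableRel G.Adj]
    (Δ q : ℕ) (hΔ : ∀ v, G.degree v ≤ Δ) (hq : Δ + 2 ≤ q)
    (D : V → Fin q) (hD : ∀ u w, G.Adj u w → D u ≠ D w) :
    ∀ n (C : V → Fin q), (∀ u w, G.Adj u w → C u ≠ C w) →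
      (univ.filter (fun u => C u ≠ D u)).card ≤ n →
      Relation.ReflTransGen (GStep G q) C D := by
  intro n
  induction n with
  | zero =>
    intro C hC hcard
    have : C = D := by
      funext u
      by_contra h
      have : u ∈ univ.filter (fun u => C u ≠ D u) := by simp [h]
      rw [Nat.le_zero, card_eq_zero] at hcard
      simp [hcard] at this
    rw [this]
  | succ n ih =>
    intro C hC hcard
    by_cases hempty : (univ.filter (fun u => C u ≠ D u)) = ∅
    · have : C = D := by
        funext u
        by_contra h
        have : u ∈ univ.filter (fun u => C u ≠ D u) := by simp [h]
        simp [hempty] at this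
      rw [this]
    · obtain ⟨v, hv⟩ := nonempty_of_ne_empty hempty
      rw [mem_filter] at hv
      have hvne : C v ≠ D v := hv.2
      obtain ⟨C', hpath, hC', hadj, hchg⟩ :=
        clear_nbrs G Δ q hΔ hq v (D v)
          (univ.filter (fun u => G.Adj v u ∧ C u = D v)).card C hC le_rfl
      set C'' : V → Fin q := Function.update C' v (D v) with hC''def
      have hupd_ne : ∀ w, w ≠ v → C'' w = C' w := fun w hw => Function.update_of_ne hw _ _
      have hupd_v : C'' v = D v := Function.update_self _ _ _
      have hC'' : ∀ a b, G.Adj a b → C'' a ≠ C'' b := by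
        intro a b hab
        by_cases ha : a = v
        · rw [ha] at hab ⊢
          have hb : b ≠ v := hab.ne'
          rw [hupd_v, hupd_ne b hb]
          exact fun h => hadj b hab h.symm
        · by_cases hb : b = v
          · rw [hb] at hab ⊢
            rw [hupd_v, hupd_ne a ha]
            exact hadj a hab.symm
          · rw [hupd_ne a ha, hupd_ne b hb]
            exact hC' a b hab
      have hstep : GStep G q C' C'' :=
        ⟨hC'', v, fun w hw => (hupd_ne w hw).symm⟩
      have hsub : (univ.filter (fun u => C'' u ≠ D u)) ⊆
          (univ.filter (fun u => C u ≠ D u)).erase v := by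
        intro w hw
        rw [mem_filter] at hw
        have hwv : w ≠ v := by
          intro h; subst h
          exact hw.2 hupd_v
        rw [mem_erase, mem_filter]
        refine ⟨hwv, mem_univ _, ?_⟩
        rw [hupd_ne w hwv] at hw
        by_cases hch : C' w = C w
        · rw [hch] at hw; exact hw.2
        · obtain ⟨hadjw, hcw⟩ := hchg w hch
          rw [hcw]
          exact hD v w hadjw
      have hcard' : (univ.filter (fun u => C'' u ≠ D u)).card ≤ n := by
        have h1 := card_le_card hsub
        have hmem : v ∈ univ.filter (fun u => C u ≠ D u) := by simp [hvne]
        rw [card_erase_of_mem hmem] at h1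
        omega
      exact (hpath.tail hstep).trans (ih C'' hC'' hcard')

/-- For `q ≥ Δ + 2`, the Glauber dynamics on proper `q`-colourings of a finite
graph `G` of maximum degree `Δ` is irreducible: any proper colouring can be
transformed into any other by single-vertex recolourings through proper
colourings. -/
theorem stmt10 {V : Type*} [Fintype V] (G : SimpleGraph V) [DecidableRel G.Adj]
    (Δ q : ℕ) (hΔ : ∀ v, G.degree v ≤ Δ) (hq : Δ + 2 ≤ q)
    (C D : V → Fin q)
    (hC : ∀ u w, G.Adj u w → C u ≠ C w) (hD : ∀ u w, G.Adj u w → D u ≠ D w) :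
    Relation.ReflTransGen
      (fun C₁ C₂ : V → Fin q =>
        (∀ u w, G.Adj u w → C₂ u ≠ C₂ w) ∧ ∃ v, ∀ u, u ≠ v → C₁ u = C₂ u)
      C D := by
  classical
  exact glauber_main G Δ q hΔ hq D hD (Fintype.card V) C hC
    (le_trans (card_filter_le _ _) (by simp))
end

section
/- Suppose (Γ_d)_{d≥1} is a family of nonnegative reals indexed by elements X of a set U partitioned into classes U₁,…,U_N, satisfying: (i) Γ₁(X) ≤ 1 for all X, and (ii) for each X in class U_i with d > 1, Γ_d(X) ≤ μ(X) · Σ_{k=1}^{5} sup{Γ_{d−1}(Y) : Y ∈ U_{b_k(X)}}, where b_k(X) ∈ {0,1,…,N}, U₀ = ∅ with sup over ∅ defined as 0. If there exist constants α₁,…,α_N ∈ [2,6], ε ∈ (0,1/2], and for every X in class U_i the inequality μ(X)·(α_{b₁(X)} + ⋯ + α_{b₅(X)}) ≤ α_i(1−ε) holds (with α₀ = 0), then for all d ≥ 1 and all X in class U_i, Γ_d(X) ≤ α_i(1−ε)^d. -/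
open Finset

/-- Abstract inductive exponential-decay argument (Lemma 10 of the paper). -/
theorem stmt13 {X : Type*} (N : ℕ) (idx : X → ℕ)
    (hidx : ∀ x, 1 ≤ idx x ∧ idx x ≤ N)
    (μ : X → ℝ) (hμ : ∀ x, 0 ≤ μ x)
    (b : X → Fin 5 → ℕ) (hb : ∀ x k, b x k ≤ N)
    (Γ : ℕ → X → ℝ) (hΓ0 : ∀ d x, 0 ≤ Γ d x)
    (hΓ1 : ∀ x, Γ 1 x ≤ 1)
    (hrec : ∀ x d, 1 < d →
      Γ d x ≤ μ x * ∑ k : Fin 5, sSup ((fun y => Γ (d - 1) y) '' {y | idx y = b x k}))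
    (α : ℕ → ℝ) (hα0 : α 0 = 0)
    (hα : ∀ i, 1 ≤ i → i ≤ N → 2 ≤ α i ∧ α i ≤ 6)
    (ε : ℝ) (hε0 : 0 < ε) (hε1 : ε ≤ 1/2)
    (hLP : ∀ x, μ x * ∑ k : Fin 5, α (b x k) ≤ α (idx x) * (1 - ε)) :
    ∀ d x, 1 ≤ d → Γ d x ≤ α (idx x) * (1 - ε) ^ d := by
  have hεnn : (0:ℝ) ≤ 1 - ε := by linarith
  have hαnn : ∀ i, i ≤ N → 0 ≤ α i := by
    intro i hi
    rcases Nat.eq_zero_or_pos i with h | h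
    · simp [h, hα0]
    · linarith [(hα i h hi).1]
  intro d x hd1
  induction d, hd1 using Nat.le_induction generalizing x with
  | base =>
    have h2 := (hα (idx x) (hidx x).1 (hidx x).2).1
    calc Γ 1 x ≤ 1 := hΓ1 x
      _ ≤ 2 * (1 - ε) := by linarith
      _ ≤ α (idx x) * (1 - ε) ^ 1 := by rw [pow_one]; nlinarith
  | succ d hd ih =>
    have hsup : ∀ k : Fin 5,
        sSup ((fun y => Γ d y) '' {y | idx y = b x k}) ≤ α (b x k) * (1 - ε) ^ d := by
      intro k
      apply Real.sSup_le
      · rintro v ⟨y, hy, rfl⟩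
        have := ih y
        rwa [Set.mem_setOf_eq.mp hy] at this
      · exact mul_nonneg (hαnn _ (hb x k)) (pow_nonneg hεnn d)
    have hrec' := hrec x (d + 1) (by omega)
    simp only [Nat.add_sub_cancel] at hrec'
    calc Γ (d + 1) x ≤ μ x * ∑ k : Fin 5, sSup ((fun y => Γ d y) '' {y | idx y = b x k}) :=
          hrec'
      _ ≤ μ x * ∑ k : Fin 5, α (b x k) * (1 - ε) ^ d := by
          apply mul_le_mul_of_nonneg_left _ (hμ x)
          exact Finset.sum_le_sum fun k _ => hsup k
      _ = (μ x * ∑ k : Fin 5, α (b x k)) * (1 - ε) ^ d := by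
          rw [← Finset.sum_mul, mul_assoc]
      _ ≤ (α (idx x) * (1 - ε)) * (1 - ε) ^ d := by
          exact mul_le_mul_of_nonneg_right (hLP x) (pow_nonneg hεnn d)
      _ = α (idx x) * (1 - ε) ^ (d + 1) := by ring
end
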